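/- arXiv:2308.16626 — 10 statements merged into one kernel-verified Lean document; each statement's English description precedes it below -/
import Mathlib

section
/- Let λ, μ, ν be integer partitions such that (λ, μ, ν) is (⊞,⊞)-storable. Define θ by θ_1 = max(λ_1, ν_1) and θ_i = min(λ_{i−1}, ν_{i−1}) + max(λ_i, ν_i) − μ_{i−1} for i ≥ 2. Then θ is an integer partition and (λ, θ, ν) is strongly (⊟,⊟)-storable. -/
/-! Storability of `(λ, μ)` and `(ν, μ)` gives `max(λ_i, ν_i) ≤ μ_{i-1} ≤ min(λ_{i-1}, ν_{i-1})`,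
so the truncated subtraction in `θ_i` is harmless and `θ_i` is squeezed between
`max(λ_i, ν_i)` and `min(λ_{i-1}, ν_{i-1})`. These two bounds alone make `θ` interlace both
`λ` and `ν` from above, force `θ` to decrease, and make it vanish wherever `λ` does. -/

/-- An integer partition, modeled as a function `l : ℕ → ℕ` where `l i` is the part
`λ_{i+1}` (0-indexed): weakly decreasing with only finitely many nonzero entries. -/
def IsPartition (l : ℕ → ℕ) : Prop :=
  (∀ i, l (i + 1) ≤ l i) ∧ ∃ N, ∀ i, N ≤ i → l i = 0

/-- `(l, m)` is a storable pair: `λ_i ≥ μ_i ≥ λ_{i+1}` for all `i ≥ 1` (0-indexed). -/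
def StorablePair (l m : ℕ → ℕ) : Prop :=
  ∀ i, m i ≤ l i ∧ l (i + 1) ≤ m i

/-- `(λ, μ, ν)` is `(⊞,⊞)`-storable: `(λ, μ)` and `(ν, μ)` are storable pairs. -/
def StorablePP (l m n : ℕ → ℕ) : Prop := StorablePair l m ∧ StorablePair n m

/-- `(λ, μ, ν)` is `(⊞,⊟)`-storable: `(λ, μ)` and `(μ, ν)` are storable pairs. -/
def StorablePM (l m n : ℕ → ℕ) : Prop := StorablePair l m ∧ StorablePair m n

/-- `(λ, μ, ν)` is `(⊟,⊞)`-storable: `(μ, λ)` and `(ν, μ)` are storable pairs. -/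
def StorableMP (l m n : ℕ → ℕ) : Prop := StorablePair m l ∧ StorablePair n m

/-- `(λ, μ, ν)` is `(⊟,⊟)`-storable: `(μ, λ)` and `(μ, ν)` are storable pairs. -/
def StorableMM (l m n : ℕ → ℕ) : Prop := StorablePair m l ∧ StorablePair m n

/-- `(λ, μ, ν)` is strongly `(⊟,⊟)`-storable: `(⊟,⊟)`-storable with `λ_1 = μ_1` or `μ_1 = ν_1`. -/
def StronglyStorableMM (l m n : ℕ → ℕ) : Prop :=
  StorableMM l m n ∧ (l 0 = m 0 ∨ m 0 = n 0)

/-- Diagonal transformation for a `(⊞,⊞)`-storable triplet: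
`θ_1 = max(λ_1, ν_1)`, `θ_i = min(λ_{i−1}, ν_{i−1}) + max(λ_i, ν_i) − μ_{i−1}` for `i ≥ 2`. -/
def diagPP (l m n : ℕ → ℕ) : ℕ → ℕ
  | 0 => max (l 0) (n 0)
  | j + 1 => min (l j) (n j) + max (l (j + 1)) (n (j + 1)) - m j

/-- Diagonal transformation for a `(⊞,⊟)`-storable triplet:
`θ_1 = λ_1 + max(λ_2, ν_1) − μ_1`, `θ_i = min(λ_i, ν_{i−1}) + max(λ_{i+1}, ν_i) − μ_i` for `i ≥ 2`. -/
def diagPM (l m n : ℕ → ℕ) : ℕ → ℕ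
  | 0 => l 0 + max (l 1) (n 0) - m 0
  | j + 1 => min (l (j + 1)) (n j) + max (l (j + 2)) (n (j + 1)) - m (j + 1)

/-- Diagonal transformation for a `(⊟,⊞)`-storable triplet:
`θ_1 = ν_1 + max(λ_1, ν_2) − μ_1`, `θ_i = min(λ_{i−1}, ν_i) + max(λ_i, ν_{i+1}) − μ_i` for `i ≥ 2`. -/
def diagMP (l m n : ℕ → ℕ) : ℕ → ℕ
  | 0 => n 0 + max (l 0) (n 1) - m 0
  | j + 1 => min (l j) (n (j + 1)) + max (l (j + 1)) (n (j + 2)) - m (j + 1)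

/-- Diagonal transformation for a `(⊟,⊟)`-storable triplet:
`θ_i = min(λ_i, ν_i) + max(λ_{i+1}, ν_{i+1}) − μ_{i+1}` for all `i ≥ 1`. -/
def diagMM (l m n : ℕ → ℕ) (j : ℕ) : ℕ :=
  min (l j) (n j) + max (l (j + 1)) (n (j + 1)) - m (j + 1)

section Bounds

variable {l θ n : ℕ → ℕ}

theorem storableMM_of_bounds (hlo : ∀ i, max (l i) (n i) ≤ θ i)
    (hhi : ∀ i, θ (i + 1) ≤ min (l i) (n i)) : StorableMM l θ n :=
  ⟨fun i => ⟨(le_max_left _ _).trans (hlo i), (hhi i).trans (min_le_left _ _)⟩,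
    fun i => ⟨(le_max_right _ _).trans (hlo i), (hhi i).trans (min_le_right _ _)⟩⟩

theorem isPartition_of_bounds (hl : ∃ N, ∀ i, N ≤ i → l i = 0)
    (hlo : ∀ i, max (l i) (n i) ≤ θ i) (hhi : ∀ i, θ (i + 1) ≤ min (l i) (n i)) :
    IsPartition θ := by
  refine ⟨fun i => (hhi i).trans (min_le_max.trans (hlo i)), ?_⟩
  obtain ⟨N, hN⟩ := hl
  refine ⟨N + 1, fun i hi => ?_⟩
  obtain ⟨j, rfl⟩ : ∃ j, i = j + 1 := ⟨i - 1, by omega⟩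
  exact Nat.eq_zero_of_le_zero <| (hhi j).trans <| (min_le_left _ _).trans (hN j (by omega)).le

end Bounds

section DiagPP

variable {l m n : ℕ → ℕ}

theorem max_le_diagPP (h : StorablePP l m n) (i : ℕ) : max (l i) (n i) ≤ diagPP l m n i := by
  cases i with
  | zero => exact le_rfl
  | succ j =>
    have := h.1 j; have := h.2 j
    simp only [diagPP]
    omega

theorem diagPP_succ_le_min (h : StorablePP l m n) (j : ℕ) :
    diagPP l m n (j + 1) ≤ min (l j) (n j) := by
  have := h.1 j; have := h.2 j
  simp only [diagPP]
  omega

end DiagPP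

theorem diagPP_storable_general (l m n : ℕ → ℕ)
    (hl : IsPartition l)
    (h : StorablePP l m n) :
    IsPartition (diagPP l m n) ∧ StronglyStorableMM l (diagPP l m n) n := by
  have hlo := max_le_diagPP h
  have hhi := diagPP_succ_le_min h
  exact ⟨isPartition_of_bounds hl.2 hlo hhi, storableMM_of_bounds hlo hhi,
    (max_choice (l 0) (n 0)).imp Eq.symm id⟩

/-- If `(λ, μ, ν)` is `(⊞,⊞)`-storable, then `θ = diag(λ, μ, ν)` is an integer partition
and `(λ, θ, ν)` is strongly `(⊟,⊟)`-storable. -/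
theorem diagPP_storable (l m n : ℕ → ℕ)
    (hl : IsPartition l) (hm : IsPartition m) (hn : IsPartition n)
    (h : StorablePP l m n) :
    IsPartition (diagPP l m n) ∧ StronglyStorableMM l (diagPP l m n) n :=
  diagPP_storable_general l m n hl h
end

section
/- Let λ, μ, ν be integer partitions such that (λ, μ, ν) is (⊞,⊟)-storable. Define θ by θ_1 = λ_1 + max(λ_2, ν_1) − μ_1 and θ_i = min(λ_i, ν_{i−1}) + max(λ_{i+1}, ν_i) − μ_i for i ≥ 2. Then θ is an integer partition and (λ, θ, ν) is (⊞,⊟)-storable. -/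
/-!
Storability of `(λ, μ)` and `(μ, ν)` squeezes `μ_i` between `max(λ_{i+1}, ν_i)` and
`min(λ_i, ν_{i-1})` (just `λ_1` when `i = 1`), and `θ_i` is the reflection of `μ_i` in that
interval. So `θ_i` lies in the same interval, which says exactly that `(λ, θ)` and `(θ, ν)` are
storable; `θ` is then weakly decreasing and bounded by `λ`, hence a partition.
-/

theorem add_sub_mem_Icc {a b c : ℕ} (hbc : b ≤ c) (hca : c ≤ a) : a + b - c ∈ Set.Icc b a := by
  constructor <;> omega

theorem StorablePair.isPartition_right {l m : ℕ → ℕ} (h : StorablePair l m)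
    (hl : IsPartition l) : IsPartition m := by
  obtain ⟨N, hN⟩ := hl.2
  refine ⟨fun i => (h (i + 1)).1.trans (h i).2, N, fun i hi => ?_⟩
  exact Nat.eq_zero_of_le_zero ((h i).1.trans (hN i hi).le)

namespace StorablePM

variable {l m n : ℕ → ℕ}

theorem diagPM_zero_mem_Icc (h : StorablePM l m n) :
    diagPM l m n 0 ∈ Set.Icc (max (l 1) (n 0)) (l 0) :=
  add_sub_mem_Icc (max_le (h.1 0).2 (h.2 0).1) (h.1 0).1

theorem diagPM_succ_mem_Icc (h : StorablePM l m n) (j : ℕ) :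
    diagPM l m n (j + 1) ∈
      Set.Icc (max (l (j + 2)) (n (j + 1))) (min (l (j + 1)) (n j)) :=
  add_sub_mem_Icc (max_le (h.1 (j + 1)).2 (h.2 (j + 1)).1) (le_min (h.1 (j + 1)).1 (h.2 j).2)

theorem max_le_diagPM (h : StorablePM l m n) :
    ∀ i, max (l (i + 1)) (n i) ≤ diagPM l m n i
  | 0 => h.diagPM_zero_mem_Icc.1
  | j + 1 => (h.diagPM_succ_mem_Icc j).1

theorem diagPM_le_left (h : StorablePM l m n) : ∀ i, diagPM l m n i ≤ l i
  | 0 => h.diagPM_zero_mem_Icc.2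
  | j + 1 => (h.diagPM_succ_mem_Icc j).2.trans (min_le_left _ _)

theorem storablePair_left_diagPM (h : StorablePM l m n) : StorablePair l (diagPM l m n) :=
  fun i => ⟨h.diagPM_le_left i, (le_max_left _ _).trans (h.max_le_diagPM i)⟩

theorem storablePair_diagPM_right (h : StorablePM l m n) : StorablePair (diagPM l m n) n :=
  fun i => ⟨(le_max_right _ _).trans (h.max_le_diagPM i),
    (h.diagPM_succ_mem_Icc i).2.trans (min_le_right _ _)⟩

end StorablePM

theorem diagPM_storable_general (l m n : ℕ → ℕ)
    (hl : IsPartition l)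
    (h : StorablePM l m n) :
    IsPartition (diagPM l m n) ∧ StorablePM l (diagPM l m n) n :=
  have hθ := h.storablePair_left_diagPM
  ⟨hθ.isPartition_right hl, hθ, h.storablePair_diagPM_right⟩

/-- If `(λ, μ, ν)` is `(⊞,⊟)`-storable, then `θ = diag(λ, μ, ν)` is an integer partition
and `(λ, θ, ν)` is `(⊞,⊟)`-storable. -/
theorem diagPM_storable (l m n : ℕ → ℕ)
    (hl : IsPartition l) (hm : IsPartition m) (hn : IsPartition n)
    (h : StorablePM l m n) :
    IsPartition (diagPM l m n) ∧ StorablePM l (diagPM l m n) n :=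
  diagPM_storable_general l m n hl h
end

section
/- Let λ, μ, ν be integer partitions such that (λ, μ, ν) is (⊟,⊞)-storable. Define θ by θ_1 = ν_1 + max(λ_1, ν_2) − μ_1 and θ_i = min(λ_{i−1}, ν_i) + max(λ_i, ν_{i+1}) − μ_i for i ≥ 2. Then θ is an integer partition and (λ, θ, ν) is (⊟,⊞)-storable. -/
/-!
Write `θ_i = a_i + b_i − μ_i` with `a_i = min(λ_{i−1}, ν_i)` (and `a_1 = ν_1`) and
`b_i = max(λ_i, ν_{i+1})`. The interlacing conditions say exactly `b_i ≤ μ_i ≤ a_i`, so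
`b_i ≤ θ_i ≤ a_i`; these two bounds are the interlacing conditions for `(λ, θ, ν)`, and
`θ ≤ ν` makes `θ` vanish eventually.
-/

theorem Nat.le_add_sub_of_le {a b c : ℕ} (h : c ≤ a) : b ≤ a + b - c := by omega

theorem Nat.add_sub_le_of_le {a b c : ℕ} (h : b ≤ c) : a + b - c ≤ a := by omega

namespace StorableMP

variable {l m n : ℕ → ℕ}

theorem max_le (h : StorableMP l m n) (i : ℕ) : max (l i) (n (i + 1)) ≤ m i :=
  _root_.max_le (h.1 i).1 (h.2 i).2

theorem le_min (h : StorableMP l m n) (i : ℕ) : m (i + 1) ≤ min (l i) (n (i + 1)) :=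
  _root_.le_min (h.1 i).2 (h.2 (i + 1)).1

theorem max_le_diagMP (h : StorableMP l m n) :
    ∀ i, max (l i) (n (i + 1)) ≤ diagMP l m n i
  | 0 => Nat.le_add_sub_of_le (h.2 0).1
  | j + 1 => Nat.le_add_sub_of_le (h.le_min j)

theorem diagMP_succ_le_min (h : StorableMP l m n) (i : ℕ) :
    diagMP l m n (i + 1) ≤ min (l i) (n (i + 1)) :=
  Nat.add_sub_le_of_le (h.max_le (i + 1))

theorem diagMP_le (h : StorableMP l m n) : ∀ i, diagMP l m n i ≤ n i
  | 0 => Nat.add_sub_le_of_le (h.max_le 0)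
  | j + 1 => (h.diagMP_succ_le_min j).trans (min_le_right _ _)

end StorableMP

theorem diagMP_storable_general (l m n : ℕ → ℕ)
    (hn : IsPartition n)
    (h : StorableMP l m n) :
    IsPartition (diagMP l m n) ∧ StorableMP l (diagMP l m n) n := by
  have hl_le (i : ℕ) : l i ≤ diagMP l m n i := (le_max_left _ _).trans (h.max_le_diagMP i)
  have hn_le (i : ℕ) : n (i + 1) ≤ diagMP l m n i := (le_max_right _ _).trans (h.max_le_diagMP i)
  have hsucc_le (i : ℕ) : diagMP l m n (i + 1) ≤ l i :=
    (h.diagMP_succ_le_min i).trans (min_le_left _ _)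
  obtain ⟨N, hN⟩ := hn.2
  refine ⟨⟨fun i => (hsucc_le i).trans (hl_le i), N, fun i hi => ?_⟩,
    fun i => ⟨hl_le i, hsucc_le i⟩, fun i => ⟨h.diagMP_le i, hn_le i⟩⟩
  exact Nat.eq_zero_of_le_zero ((h.diagMP_le i).trans (hN i hi).le)

/-- If `(λ, μ, ν)` is `(⊟,⊞)`-storable, then `θ = diag(λ, μ, ν)` is an integer partition
and `(λ, θ, ν)` is `(⊟,⊞)`-storable. -/
theorem diagMP_storable (l m n : ℕ → ℕ)
    (hl : IsPartition l) (hm : IsPartition m) (hn : IsPartition n)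
    (h : StorableMP l m n) :
    IsPartition (diagMP l m n) ∧ StorableMP l (diagMP l m n) n :=
  diagMP_storable_general l m n hn h
end

section
/- Let λ, μ, ν be integer partitions such that (λ, μ, ν) is (⊟,⊟)-storable. Define θ by θ_i = min(λ_i, ν_i) + max(λ_{i+1}, ν_{i+1}) − μ_{i+1} for all i ≥ 1. Then θ is an integer partition and (λ, θ, ν) is (⊞,⊞)-storable. -/
theorem diagMM_comm (l m n : ℕ → ℕ) : diagMM l m n = diagMM n m l := by
  funext i
  simp only [diagMM, min_comm, max_comm]

namespace StorableMM

variable {l m n : ℕ → ℕ}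

theorem symm (h : StorableMM l m n) : StorableMM n m l := And.symm h

theorem storablePair_diagMM (h : StorableMM l m n) : StorablePair l (diagMM l m n) := by
  intro i
  have := h.1 i; have := h.1 (i + 1); have := h.2 i; have := h.2 (i + 1)
  simp only [diagMM]
  omega

theorem storablePP_diagMM (h : StorableMM l m n) : StorablePP l (diagMM l m n) n :=
  ⟨h.storablePair_diagMM, diagMM_comm l m n ▸ h.symm.storablePair_diagMM⟩

end StorableMM

theorem diagMM_storable_general (l m n : ℕ → ℕ)
    (hm : IsPartition m)
    (h : StorableMM l m n) :
    IsPartition (diagMM l m n) ∧ StorablePP l (diagMM l m n) n := by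
  have hθ := h.storablePP_diagMM
  exact ⟨hθ.1.isPartition_right (h.1.isPartition_right hm), hθ⟩

/-- If `(λ, μ, ν)` is `(⊟,⊟)`-storable, then `θ = diag(λ, μ, ν)` is an integer partition
and `(λ, θ, ν)` is `(⊞,⊞)`-storable. -/
theorem diagMM_storable (l m n : ℕ → ℕ)
    (hl : IsPartition l) (hm : IsPartition m) (hn : IsPartition n)
    (h : StorableMM l m n) :
    IsPartition (diagMM l m n) ∧ StorablePP l (diagMM l m n) n :=
  diagMM_storable_general l m n hm h
end

section
/- Let λ, μ, ν be integer partitions and suppose (λ, μ, ν) is either (⊞,⊞)-storable, (⊞,⊟)-storable, (⊟,⊞)-storable, or strongly (⊟,⊟)-storable. Let θ = diag(λ, μ, ν) be the diagonal transformation, computed by the formula corresponding to the storability type of (λ, μ, ν). Then diag(λ, θ, ν) = μ, where this second diagonal transformation is computed by the formula corresponding to the storability type of (λ, θ, ν) (namely strongly (⊟,⊟), (⊞,⊟), (⊟,⊞), (⊞,⊞) respectively). -/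
/-!
Away from the first entry, each diagonal transformation has the shape `θ = S − μ` (entrywise, up
to an index shift), where `S` is built from `λ` and `ν` alone and the transformation of the
opposite type uses the same `S`. Applying both gives `S − (S − μ) = μ`, which holds in `ℕ` because
storability bounds `μ` by the first summand of `S`. The one exception is the first entry of
`diagPP l (diagMM l m n) n`, which is `max(λ_1, ν_1)`; it equals `μ_1` exactly under strong
`(⊟,⊟)`-storability.
-/

section

variable {l m n : ℕ → ℕ}

theorem diagMM_diagPP (h : StorablePP l m n) : diagMM l (diagPP l m n) n = m := by
  obtain ⟨hlm, hnm⟩ := h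
  funext j
  exact Nat.sub_sub_self (Nat.le_add_right_of_le (le_min (hlm j).1 (hnm j).1))

theorem diagPM_diagPM (h : StorablePM l m n) : diagPM l (diagPM l m n) n = m := by
  obtain ⟨hlm, hmn⟩ := h
  funext j
  cases j with
  | zero => exact Nat.sub_sub_self (Nat.le_add_right_of_le (hlm 0).1)
  | succ j =>
    exact Nat.sub_sub_self (Nat.le_add_right_of_le (le_min (hlm (j + 1)).1 (hmn j).2))

theorem diagMP_diagMP (h : StorableMP l m n) : diagMP l (diagMP l m n) n = m := by
  obtain ⟨hml, hnm⟩ := h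
  funext j
  cases j with
  | zero => exact Nat.sub_sub_self (Nat.le_add_right_of_le (hnm 0).1)
  | succ j =>
    exact Nat.sub_sub_self (Nat.le_add_right_of_le (le_min (hml j).2 (hnm (j + 1)).1))

theorem diagPP_diagMM (h : StronglyStorableMM l m n) : diagPP l (diagMM l m n) n = m := by
  obtain ⟨⟨hml, hmn⟩, hfirst⟩ := h
  funext j
  cases j with
  | zero =>
    show max (l 0) (n 0) = m 0
    have hl0 := (hml 0).1
    have hn0 := (hmn 0).1
    rcases hfirst with h | h <;> omega
  | succ j => exact Nat.sub_sub_self (Nat.le_add_right_of_le (le_min (hml j).2 (hmn j).2))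

end

theorem diag_involutive_general (l m n : ℕ → ℕ) :
    (StorablePP l m n → diagMM l (diagPP l m n) n = m) ∧
    (StorablePM l m n → diagPM l (diagPM l m n) n = m) ∧
    (StorableMP l m n → diagMP l (diagMP l m n) n = m) ∧
    (StronglyStorableMM l m n → diagPP l (diagMM l m n) n = m) :=
  ⟨diagMM_diagPP, diagPM_diagPM, diagMP_diagMP, diagPP_diagMM⟩

/-- The diagonal transformation is an involution: if `(λ, μ, ν)` is `(⊞,⊞)`-, `(⊞,⊟)`-,
`(⊟,⊞)`- or strongly `(⊟,⊟)`-storable, and `θ = diag(λ, μ, ν)` is computed by the formula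
for that type, then `diag(λ, θ, ν) = μ`, the second diagonal transformation computed by
the formula for the type of `(λ, θ, ν)` (namely strongly `(⊟,⊟)`, `(⊞,⊟)`, `(⊟,⊞)`,
`(⊞,⊞)` respectively). -/
theorem diag_involutive (l m n : ℕ → ℕ)
    (hl : IsPartition l) (hm : IsPartition m) (hn : IsPartition n) :
    (StorablePP l m n → diagMM l (diagPP l m n) n = m) ∧
    (StorablePM l m n → diagPM l (diagPM l m n) n = m) ∧
    (StorableMP l m n → diagMP l (diagMP l m n) n = m) ∧
    (StronglyStorableMM l m n → diagPP l (diagMM l m n) n = m) :=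
  diag_involutive_general l m n
end

section
/- Let λ, μ, ν be integer partitions. If (λ, μ, ν) is (⊞,⊞)-storable, then λ + ν and μ are 1-interlaced. -/
/-- `r` is the integer partition `λ + ν` whose multiset of (nonzero) parts is the disjoint
union of the multisets of parts of `λ` and of `ν`. -/
def IsPartitionSum (r l n : ℕ → ℕ) : Prop :=
  IsPartition r ∧ ∀ k, 0 < k → {i | r i = k}.ncard = {i | l i = k}.ncard + {i | n i = k}.ncard

/-- `ρ` and `μ` are `1`-interlaced: `ρ_1 ≥ ρ_2 ≥ μ_1 ≥ ρ_3 ≥ ρ_4 ≥ μ_2 ≥ …`,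
i.e. `ρ_{2k} ≥ μ_k ≥ ρ_{2k+1}` for all `k ≥ 1` (0-indexed below). -/
def Interlaced1 (r m : ℕ → ℕ) : Prop :=
  ∀ j, m j ≤ r (2 * j + 1) ∧ r (2 * j + 2) ≤ m j

/-!
Count parts through the conjugate partition `λ'_x = #{i | λ_i ≥ x}`. The parts of `λ + ν` are
those of `λ` and `ν` together, so `(λ + ν)' = λ' + ν'`, and `x ≤ λ_j ↔ j ≤ λ'_x` for `x > 0`.
If `x = μ_j > 0`, storability gives `x ≤ λ_j` and `x ≤ ν_j`, so `(λ + ν)'_x ≥ 2j` and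
`μ_j ≤ (λ + ν)_{2j}`. If `y = (λ + ν)_{2j+1} > 0`, then `λ'_y + ν'_y ≥ 2j + 1`, so
`y ≤ λ_{j+1}` or `y ≤ ν_{j+1}`, and both are at most `μ_j`.
-/

/-- For `x ≥ 1` this is the part `λ'_x` of the conjugate partition (1-indexed, whereas the
parts of `f` are 0-indexed). -/
noncomputable def conjugatePart (f : ℕ → ℕ) (x : ℕ) : ℕ :=
  {i | x ≤ f i}.ncard

namespace IsPartition

variable {f : ℕ → ℕ}

theorem antitone (hf : IsPartition f) : Antitone f :=
  antitone_nat_of_succ_le hf.1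

theorem finite_setOf_le (hf : IsPartition f) {x : ℕ} (hx : 0 < x) : {i | x ≤ f i}.Finite := by
  obtain ⟨N, hN⟩ := hf.2
  refine (Set.finite_Iio N).subset fun i (hi : x ≤ f i) => ?_
  by_contra hiN
  have := hN i (not_lt.1 hiN)
  omega

theorem finite_setOf_eq (hf : IsPartition f) {x : ℕ} (hx : 0 < x) : {i | f i = x}.Finite :=
  (hf.finite_setOf_le hx).subset fun _ hi => le_of_eq (Eq.symm hi)

theorem lt_conjugatePart_iff (hf : IsPartition f) {x : ℕ} (hx : 0 < x) (j : ℕ) :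
    j < conjugatePart f x ↔ x ≤ f j := by
  constructor
  · intro hj
    by_contra hfj
    have hsub : {i | x ≤ f i} ⊆ Set.Iio j := fun i hi =>
      lt_of_not_ge fun hji => hfj (le_trans hi (hf.antitone hji))
    simpa using hj.trans_le (Set.ncard_le_ncard hsub (Set.finite_Iio j))
  · intro hfj
    have hsub : Set.Iic j ⊆ {i | x ≤ f i} := fun i hi => le_trans hfj (hf.antitone hi)
    simpa [conjugatePart] using Set.ncard_le_ncard hsub (hf.finite_setOf_le hx)

theorem conjugatePart_eq_add_conjugatePart_succ (hf : IsPartition f) {x : ℕ} (hx : 0 < x) :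
    conjugatePart f x = {i | f i = x}.ncard + conjugatePart f (x + 1) := by
  have hsplit : {i | x ≤ f i} = {i | f i = x} ∪ {i | x + 1 ≤ f i} := by
    ext i
    simp only [Set.mem_ofPred_eq, Set.mem_union]
    omega
  have hdisj : Disjoint {i | f i = x} {i | x + 1 ≤ f i} :=
    Set.disjoint_left.2 fun i (h1 : f i = x) (h2 : x + 1 ≤ f i) => by omega
  rw [conjugatePart, hsplit, Set.ncard_union_eq hdisj (hf.finite_setOf_eq hx)
    (hf.finite_setOf_le x.succ_pos), conjugatePart]

theorem conjugatePart_eq_zero (hf : IsPartition f) {x : ℕ} (hx : f 0 < x) :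
    conjugatePart f x = 0 := by
  have hempty : {i | x ≤ f i} = ∅ :=
    Set.eq_empty_of_forall_notMem fun i hi => absurd (le_trans hi (hf.antitone i.zero_le)) hx.not_ge
  rw [conjugatePart, hempty, Set.ncard_empty]

end IsPartition

theorem IsPartitionSum.conjugatePart_eq_add {r l n : ℕ → ℕ} (hr : IsPartitionSum r l n)
    (hl : IsPartition l) (hn : IsPartition n) {x : ℕ} (hx : 0 < x) :
    conjugatePart r x = conjugatePart l x + conjugatePart n x := by
  refine Nat.decreasingInduction' (P := fun k => conjugatePart r k =
    conjugatePart l k + conjugatePart n k) (fun k _ hxk ih => ?_)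
    (le_max_left x (max (r 0) (max (l 0) (n 0)) + 1)) ?_
  · have hk : 0 < k := lt_of_lt_of_le hx hxk
    rw [hr.1.conjugatePart_eq_add_conjugatePart_succ hk,
      hl.conjugatePart_eq_add_conjugatePart_succ hk,
      hn.conjugatePart_eq_add_conjugatePart_succ hk, hr.2 k hk, ih]
    ring
  · rw [hr.1.conjugatePart_eq_zero (by omega), hl.conjugatePart_eq_zero (by omega),
      hn.conjugatePart_eq_zero (by omega)]

theorem storablePP_interlaced_general (l m n r : ℕ → ℕ)
    (hl : IsPartition l) (hn : IsPartition n)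
    (h₁ : StorablePair l m) (h₂ : StorablePair n m)
    (hr : IsPartitionSum r l n) :
    Interlaced1 r m := by
  intro j
  constructor
  · obtain hx | hx := (m j).eq_zero_or_pos
    · exact hx ▸ Nat.zero_le _
    have hjl := (hl.lt_conjugatePart_iff hx j).2 (h₁ j).1
    have hjn := (hn.lt_conjugatePart_iff hx j).2 (h₂ j).1
    rw [← hr.1.lt_conjugatePart_iff hx, hr.conjugatePart_eq_add hl hn hx]
    omega
  · obtain hy | hy := (r (2 * j + 2)).eq_zero_or_pos
    · exact hy ▸ Nat.zero_le _
    have hjr := (hr.1.lt_conjugatePart_iff hy _).2 le_rfl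
    rw [hr.conjugatePart_eq_add hl hn hy] at hjr
    rcases lt_or_ge (j + 1) (conjugatePart l (r (2 * j + 2))) with hjl | hjl
    · exact ((hl.lt_conjugatePart_iff hy _).1 hjl).trans (h₁ j).2
    · exact ((hn.lt_conjugatePart_iff hy _).1 (by omega)).trans (h₂ j).2

/-- If `(λ, μ, ν)` is `(⊞,⊞)`-storable (i.e. `(λ, μ)` and `(ν, μ)` are storable pairs),
then `λ + ν` and `μ` are `1`-interlaced. -/
theorem storablePP_interlaced (l m n r : ℕ → ℕ)
    (hl : IsPartition l) (hm : IsPartition m) (hn : IsPartition n)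
    (h₁ : StorablePair l m) (h₂ : StorablePair n m)
    (hr : IsPartitionSum r l n) :
    Interlaced1 r m :=
  storablePP_interlaced_general l m n r hl hn h₁ h₂ hr
end

section
/- Let λ, μ, ν be integer partitions. If (λ, μ, ν) is either (⊞,⊟)-storable or (⊟,⊞)-storable, then λ + ν and μ are 0-interlaced. -/
/-- `ρ` and `μ` are `0`-interlaced: `ρ_1 ≥ μ_1 ≥ ρ_2 ≥ ρ_3 ≥ μ_2 ≥ ρ_4 ≥ …`,
i.e. `ρ_{2k−1} ≥ μ_k ≥ ρ_{2k}` for all `k ≥ 1` (0-indexed below). -/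
def Interlaced0 (r m : ℕ → ℕ) : Prop :=
  ∀ j, m j ≤ r (2 * j) ∧ r (2 * j + 1) ≤ m j

/-!
Pass to conjugate partitions `p'_v = #{i | v ≤ p_i}`. For a partition and `v > 0`,
`v ≤ p_j ↔ j < p'_v`, and the conjugate of `λ + ν` is `λ' + ν'`, so both interlacing inequalities
become inequalities between column lengths. Indexing parts from `0`, in the `(⊞,⊟)` case (the
other one is the same with `λ` and `ν` swapped) storability gives `λ'_{μ_j} ≥ j + 1` and
`ν'_{μ_j} ≥ j` from `λ_j ≥ μ_j` and `ν_{j-1} ≥ μ_j`, and `λ'_{μ_j+1} ≤ j + 1`, `ν'_{μ_j+1} ≤ j`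
from `λ_{j+1} ≤ μ_j` and `ν_j ≤ μ_j`. Hence `(λ + ν)'_{μ_j} ≥ 2j + 1 ≥ (λ + ν)'_{μ_j+1}`,
that is, `ρ_{2j} ≥ μ_j ≥ ρ_{2j+1}`.
-/

/-- The column length `λ'_v` for `v ≥ 1`; `conjugate p 0 = 0` because that set is infinite. -/
noncomputable def conjugate (p : ℕ → ℕ) (v : ℕ) : ℕ :=
  {i | v ≤ p i}.ncard

namespace IsPartition

variable {p : ℕ → ℕ} {v : ℕ}

theorem antitone_s9 (hp : IsPartition p) : Antitone p :=
  antitone_nat_of_succ_le hp.1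

theorem finite_setOf_le_s9 (hp : IsPartition p) (hv : 0 < v) : {i | v ≤ p i}.Finite := by
  obtain ⟨N, hN⟩ := hp.2
  refine (Set.finite_Iio N).subset fun i (hi : v ≤ p i) => Set.mem_Iio.2 (not_le.1 fun hiN => ?_)
  rw [hN i hiN] at hi
  omega

theorem conjugate_eq_zero (hp : IsPartition p) (hv : p 0 < v) : conjugate p v = 0 := by
  have hempty : {i | v ≤ p i} = ∅ :=
    Set.eq_empty_of_forall_notMem fun i (hi : v ≤ p i) =>
      absurd ((hp.antitone_s9 (Nat.zero_le i)).trans_lt hv) hi.not_gt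
  rw [conjugate, hempty, Set.ncard_empty]

theorem conjugate_eq_add (hp : IsPartition p) (hv : 0 < v) :
    conjugate p v = {i | p i = v}.ncard + conjugate p (v + 1) := by
  have hsplit : {i | v ≤ p i} = {i | p i = v} ∪ {i | v + 1 ≤ p i} := by
    ext i
    simp only [Set.mem_ofPred_eq, Set.mem_union]
    omega
  rw [conjugate, hsplit, conjugate]
  exact Set.ncard_union_eq
    (Set.disjoint_left.2 fun i (h₁ : p i = v) (h₂ : v + 1 ≤ p i) => by omega)
    ((hp.finite_setOf_le_s9 hv).subset fun i (h : p i = v) => h.ge)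
    (hp.finite_setOf_le_s9 v.succ_pos)

theorem le_iff_lt_conjugate (hp : IsPartition p) (hv : 0 < v) (j : ℕ) :
    v ≤ p j ↔ j < conjugate p v := by
  constructor
  · intro hj
    have hsub : Set.Iic j ⊆ {i | v ≤ p i} := fun i hi => hj.trans (hp.antitone_s9 hi)
    simpa [conjugate] using Set.ncard_le_ncard hsub (hp.finite_setOf_le_s9 hv)
  · intro hj
    by_contra hpj
    have hsub : {i | v ≤ p i} ⊆ Set.Iio j := fun i (hi : v ≤ p i) =>
      not_le.1 fun hji => hpj (hi.trans (hp.antitone_s9 hji))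
    have hcard := Set.ncard_le_ncard hsub (Set.finite_Iio j)
    rw [Set.ncard_Iio_nat] at hcard
    exact lt_irrefl j (hj.trans_le hcard)

end IsPartition

namespace IsPartitionSum

variable {r l n : ℕ → ℕ}

theorem symm (hr : IsPartitionSum r l n) : IsPartitionSum r n l :=
  ⟨hr.1, fun k hk => (hr.2 k hk).trans (add_comm _ _)⟩

theorem conjugate_eq_add (hl : IsPartition l) (hn : IsPartition n) (hr : IsPartitionSum r l n)
    {v : ℕ} (hv : 0 < v) : conjugate r v = conjugate l v + conjugate n v := by
  obtain ⟨k, hk⟩ : ∃ k, r 0 + l 0 + n 0 < v + k := ⟨r 0 + l 0 + n 0 + 1, by omega⟩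
  induction k generalizing v with
  | zero =>
    rw [hr.1.conjugate_eq_zero (by omega), hl.conjugate_eq_zero (by omega),
      hn.conjugate_eq_zero (by omega)]
  | succ k ih =>
    rw [hr.1.conjugate_eq_add hv, hl.conjugate_eq_add hv, hn.conjugate_eq_add hv,
      ih v.succ_pos (by omega), hr.2 v hv]
    ring

end IsPartitionSum

theorem interlaced0_of_storablePair {a b m r : ℕ → ℕ} (ha : IsPartition a) (hb : IsPartition b)
    (hr : IsPartitionSum r a b) (ham : StorablePair a m) (hmb : StorablePair m b) :
    Interlaced0 r m := by
  intro j
  constructor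
  · rcases Nat.eq_zero_or_pos (m j) with hmj | hmj
    · omega
    rw [hr.1.le_iff_lt_conjugate hmj, hr.conjugate_eq_add ha hb hmj]
    have hcol_a : j < conjugate a (m j) := (ha.le_iff_lt_conjugate hmj j).1 (ham j).1
    have hcol_b : j ≤ conjugate b (m j) := by
      cases j with
      | zero => exact Nat.zero_le _
      | succ i => exact (hb.le_iff_lt_conjugate hmj i).1 (hmb i).2
    omega
  · have hv : 0 < m j + 1 := Nat.succ_pos _
    rw [← Nat.lt_succ_iff, ← not_le, hr.1.le_iff_lt_conjugate hv, hr.conjugate_eq_add ha hb hv,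
      not_lt]
    have hcol_a : conjugate a (m j + 1) ≤ j + 1 := by
      rw [← not_lt, ← ha.le_iff_lt_conjugate hv, not_le, Nat.lt_succ_iff]
      exact (ham j).2
    have hcol_b : conjugate b (m j + 1) ≤ j := by
      rw [← not_lt, ← hb.le_iff_lt_conjugate hv, not_le, Nat.lt_succ_iff]
      exact (hmb j).1
    omega

theorem storablePMorMP_interlaced_general (l m n r : ℕ → ℕ)
    (hl : IsPartition l) (hn : IsPartition n)
    (h : (StorablePair l m ∧ StorablePair m n) ∨ (StorablePair m l ∧ StorablePair n m))
    (hr : IsPartitionSum r l n) :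
    Interlaced0 r m := by
  rcases h with ⟨hlm, hmn⟩ | ⟨hml, hnm⟩
  · exact interlaced0_of_storablePair hl hn hr hlm hmn
  · exact interlaced0_of_storablePair hn hl hr.symm hnm hml

/-- If `(λ, μ, ν)` is `(⊞,⊟)`-storable or `(⊟,⊞)`-storable, then `λ + ν` and `μ`
are `0`-interlaced. -/
theorem storablePMorMP_interlaced (l m n r : ℕ → ℕ)
    (hl : IsPartition l) (hm : IsPartition m) (hn : IsPartition n)
    (h : (StorablePair l m ∧ StorablePair m n) ∨ (StorablePair m l ∧ StorablePair n m))
    (hr : IsPartitionSum r l n) :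
    Interlaced0 r m :=
  storablePMorMP_interlaced_general l m n r hl hn h hr
end

section
/- Let λ, μ, ν be integer partitions. If (λ, μ, ν) is strongly (⊟,⊟)-storable, then λ + ν and μ are (−1)-interlaced. -/
/-- `ρ` and `μ` are `(−1)`-interlaced: `ρ_1 = μ_1` and
`ρ_2 ≥ μ_2 ≥ ρ_3 ≥ ρ_4 ≥ μ_3 ≥ ρ_5 ≥ …`, i.e. `ρ_{2j} ≥ μ_{j+1} ≥ ρ_{2j+1}`
for all `j ≥ 1` (0-indexed below). -/
def InterlacedNeg1 (r m : ℕ → ℕ) : Prop :=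
  r 0 = m 0 ∧ ∀ j, m (j + 1) ≤ r (2 * j + 1) ∧ r (2 * j + 2) ≤ m (j + 1)

/-- The number of indices `i < N` with `p i > k`. -/
def cnt (p : ℕ → ℕ) (N k : ℕ) : ℕ :=
  ((Finset.range N).filter (fun j => k < p j)).card

lemma aux_mem (p : ℕ → ℕ) (hp : ∀ i, p (i + 1) ≤ p i) (N : ℕ)
    (hN : ∀ i, N ≤ i → p i = 0) (k i : ℕ) :
    k < p i ↔ i < cnt p N k := by
  have anti : Antitone p := antitone_nat_of_succ_le hp
  simp only [cnt]
  set S := (Finset.range N).filter (fun j => k < p j) with hS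
  have hmem : ∀ j, j ∈ S ↔ k < p j := by
    intro j
    simp only [hS, Finset.mem_filter, Finset.mem_range]
    constructor
    · exact fun h => h.2
    · intro h
      refine ⟨?_, h⟩
      by_contra hj
      push_neg at hj
      have := hN j hj
      omega
  constructor
  · intro h
    have hsub : Finset.range (i + 1) ⊆ S := by
      intro j hj
      rw [Finset.mem_range] at hj
      rw [hmem]
      exact lt_of_lt_of_le h (anti (by omega))
    have := Finset.card_le_card hsub
    simpa using this
  · intro h
    by_contra hk
    push_neg at hk
    have hsub : S ⊆ Finset.range i := by
      intro j hj
      rw [hmem] at hj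
      rw [Finset.mem_range]
      by_contra hji
      push_neg at hji
      have := anti hji
      omega
    have := Finset.card_le_card hsub
    simp only [Finset.card_range] at this
    omega

lemma aux_card_filter (p : ℕ → ℕ) (N B k : ℕ) (hB : ∀ i, p i ≤ B) :
    cnt p N k = ∑ v ∈ Finset.Ioc k B, ((Finset.range N).filter (fun i => p i = v)).card := by
  rw [cnt, Finset.card_eq_sum_card_fiberwise (f := p) (t := Finset.Ioc k B)
    (fun x hx => by
      simp only [Finset.mem_coe, Finset.mem_filter] at hx
      exact Finset.mem_Ioc.mpr ⟨hx.2, hB x⟩)]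
  apply Finset.sum_congr rfl
  intro v hv
  rw [Finset.mem_Ioc] at hv
  congr 1
  ext i
  simp only [Finset.mem_filter, Finset.mem_range]
  constructor
  · exact fun h => ⟨h.1.1, h.2⟩
  · intro h
    exact ⟨⟨h.1, h.2 ▸ hv.1⟩, h.2⟩

lemma aux_ncard (p : ℕ → ℕ) (N : ℕ) (hN : ∀ i, N ≤ i → p i = 0) (v : ℕ) (hv : 0 < v) :
    {i | p i = v}.ncard = ((Finset.range N).filter (fun i => p i = v)).card := by
  rw [← Set.ncard_coe_finset]
  congr 1
  ext i
  simp only [Set.mem_setOf_eq, Finset.coe_filter, Finset.mem_range, Set.mem_setOf_eq]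
  constructor
  · intro h
    refine ⟨?_, h⟩
    by_contra hi
    push_neg at hi
    have := hN i hi
    omega
  · exact fun h => h.2

/-- If `(λ, μ, ν)` is strongly `(⊟,⊟)`-storable (i.e. `(μ, λ)` and `(μ, ν)` are storable
pairs and `λ_1 = μ_1` or `μ_1 = ν_1`), then `λ + ν` and `μ` are `(−1)`-interlaced. -/
theorem stronglyStorableMM_interlaced (l m n r : ℕ → ℕ)
    (hl : IsPartition l) (hm : IsPartition m) (hn : IsPartition n)
    (h₁ : StorablePair m l) (h₂ : StorablePair m n)
    (hstrong : l 0 = m 0 ∨ m 0 = n 0)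
    (hr : IsPartitionSum r l n) :
    InterlacedNeg1 r m := by
  obtain ⟨hrp, hcount⟩ := hr
  obtain ⟨Nl, hNl⟩ := hl.2
  obtain ⟨Nn, hNn⟩ := hn.2
  obtain ⟨Nr, hNr⟩ := hrp.2
  set N := max Nl (max Nn Nr) with hNdef
  have hNl' : ∀ i, N ≤ i → l i = 0 := fun i hi => hNl i (le_trans (le_max_left _ _) hi)
  have hNn' : ∀ i, N ≤ i → n i = 0 :=
    fun i hi => hNn i (le_trans (le_trans (le_max_left _ _) (le_max_right _ _)) hi)
  have hNr' : ∀ i, N ≤ i → r i = 0 :=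
    fun i hi => hNr i (le_trans (le_trans (le_max_right _ _) (le_max_right _ _)) hi)
  have antil : Antitone l := antitone_nat_of_succ_le hl.1
  have antin : Antitone n := antitone_nat_of_succ_le hn.1
  have antir : Antitone r := antitone_nat_of_succ_le hrp.1
  set B := max (l 0) (max (n 0) (r 0)) with hBdef
  have hBl : ∀ i, l i ≤ B := fun i => le_trans (antil (Nat.zero_le i)) (le_max_left _ _)
  have hBn : ∀ i, n i ≤ B :=
    fun i => le_trans (antin (Nat.zero_le i)) (le_trans (le_max_left _ _) (le_max_right _ _))
  have hBr : ∀ i, r i ≤ B :=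
    fun i => le_trans (antir (Nat.zero_le i)) (le_trans (le_max_right _ _) (le_max_right _ _))
  -- the key counting identity
  have key : ∀ k, cnt r N k = cnt l N k + cnt n N k := by
    intro k
    rw [aux_card_filter r N B k hBr, aux_card_filter l N B k hBl,
      aux_card_filter n N B k hBn, ← Finset.sum_add_distrib]
    apply Finset.sum_congr rfl
    intro v hv
    rw [Finset.mem_Ioc] at hv
    have hv0 : 0 < v := by omega
    have := hcount v hv0
    rw [aux_ncard r N hNr' v hv0, aux_ncard l N hNl' v hv0, aux_ncard n N hNn' v hv0] at this
    exact this
  have Hl : ∀ k i, k < l i ↔ i < cnt l N k := aux_mem l hl.1 N hNl'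
  have Hn : ∀ k i, k < n i ↔ i < cnt n N k := aux_mem n hn.1 N hNn'
  have Hr : ∀ k i, k < r i ↔ i < cnt l N k + cnt n N k := by
    intro k i
    rw [aux_mem r hrp.1 N hNr' k i, key k]
  constructor
  · -- r 0 = m 0
    have hle : r 0 ≤ m 0 := by
      by_contra h
      push_neg at h
      have h0 : (0:ℕ) < cnt l N (m 0) + cnt n N (m 0) := (Hr (m 0) 0).mp h
      rcases Nat.lt_or_ge 0 (cnt l N (m 0)) with h' | h'
      · have := (Hl (m 0) 0).mpr h'
        exact absurd (h₁ 0).1 (by omega)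
      · have h'' : 0 < cnt n N (m 0) := by omega
        have := (Hn (m 0) 0).mpr h''
        exact absurd (h₂ 0).1 (by omega)
    have hge : m 0 ≤ r 0 := by
      by_contra h
      push_neg at h
      rcases hstrong with hs | hs
      · have : r 0 < l 0 := by omega
        have h1 : 0 < cnt l N (r 0) := (Hl (r 0) 0).mp this
        have : r 0 < r 0 := (Hr (r 0) 0).mpr (by omega)
        omega
      · have : r 0 < n 0 := by omega
        have h1 : 0 < cnt n N (r 0) := (Hn (r 0) 0).mp this
        have : r 0 < r 0 := (Hr (r 0) 0).mpr (by omega)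
        omega
    omega
  · intro j
    constructor
    · -- m (j+1) ≤ r (2j+1)
      by_contra h
      push_neg at h
      set k := r (2 * j + 1) with hk
      have hkm : k < m (j + 1) := h
      have hlj : k < l j := lt_of_lt_of_le hkm (h₁ j).2
      have hnj : k < n j := lt_of_lt_of_le hkm (h₂ j).2
      have hcl : j < cnt l N k := (Hl k j).mp hlj
      have hcn : j < cnt n N k := (Hn k j).mp hnj
      have : k < r (2 * j + 1) := (Hr k (2 * j + 1)).mpr (by omega)
      omega
    · -- r (2j+2) ≤ m (j+1)
      by_contra h
      push_neg at h
      set k := m (j + 1) with hk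
      have : 2 * j + 2 < cnt l N k + cnt n N k := (Hr k (2 * j + 2)).mp h
      rcases Nat.lt_or_ge (j + 1) (cnt l N k) with h' | h'
      · have := (Hl k (j + 1)).mpr h'
        exact absurd (h₁ (j + 1)).1 (by omega)
      · have h'' : j + 1 < cnt n N k := by omega
        have := (Hn k (j + 1)).mpr h''
        exact absurd (h₂ (j + 1)).1 (by omega)
end

section
/- Fix n ≥ 1. For every pair (C, F) of subsets of {1, …, n}, there exists a unique effective pair (B, E) of subsets of {1, …, n} such that J(C, F) = J(B, E). -/
/-- `K` is an interval of `{1, …, n}`: a set `⟦i,j⟧ = {i, i+1, …, j}` with `1 ≤ i ≤ j ≤ n`. -/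
def IsInterval (n : ℕ) (K : Set ℕ) : Prop :=
  ∃ i j, 1 ≤ i ∧ i ≤ j ∧ j ≤ n ∧ K = Set.Icc i j

/-- The lower bound `b(K)` of an interval `K`. -/
noncomputable def intB (K : Set ℕ) : ℕ := sInf K

/-- The upper bound `e(K)` of an interval `K`. -/
noncomputable def intE (K : Set ℕ) : ℕ := sSup K

/-- `J(B, E)`: the set of intervals `K` of `{1, …, n}` with `b(K) ∈ B` and `e(K) ∈ E`. -/
def intervalsOf (n : ℕ) (B E : Set ℕ) : Set (Set ℕ) :=
  {K | IsInterval n K ∧ intB K ∈ B ∧ intE K ∈ E}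

/-- Two intervals `K`, `L` are adjacent if `b(K) = e(L) + 1` or `b(L) = e(K) + 1`. -/
def Adjacent (K L : Set ℕ) : Prop :=
  intB K = intE L + 1 ∨ intB L = intE K + 1

/-- An interval set is adjacency-avoiding if it contains no pair of adjacent intervals. -/
def AdjAvoiding (J : Set (Set ℕ)) : Prop :=
  ∀ K ∈ J, ∀ L ∈ J, ¬ Adjacent K L

/-- The shift `A[1] = {a + 1 : a ∈ A}` of a set of integers. -/
def shiftSet (A : Set ℕ) : Set ℕ := (· + 1) '' A

/-- `(B, E)` is an effective pair: every element of `B` is below some element of `E`,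
and every element of `E` is above some element of `B`. -/
def Effective (B E : Set ℕ) : Prop :=
  (∀ b ∈ B, ∃ e ∈ E, b ≤ e) ∧ (∀ e ∈ E, ∃ b ∈ B, b ≤ e)

/-!
Every interval `⟦b, e⟧` with `b ≤ e` witnesses `b ∈ B` and `e ∈ E` inside `J(B, E)`. For an
effective pair every point of `B` and of `E` is such an endpoint, so an effective pair is
recovered from `J(B, E)`: this gives uniqueness. For existence, discard from `C` the points
above all of `F` and from `F` the points below all of `C`; these are endpoints of no interval.
-/

lemma intB_Icc {a b : ℕ} (h : a ≤ b) : intB (Set.Icc a b) = a := csInf_Icc h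

lemma intE_Icc {a b : ℕ} (h : a ≤ b) : intE (Set.Icc a b) = b := csSup_Icc h

lemma Icc_mem_intervalsOf {n a b : ℕ} {B E : Set ℕ} (h1 : 1 ≤ a) (hab : a ≤ b) (hn : b ≤ n)
    (ha : a ∈ B) (hb : b ∈ E) : Set.Icc a b ∈ intervalsOf n B E :=
  ⟨⟨a, b, h1, hab, hn, rfl⟩, (intB_Icc hab).symm ▸ ha, (intE_Icc hab).symm ▸ hb⟩

lemma mem_of_Icc_mem_intervalsOf {n a b : ℕ} {B E : Set ℕ} (hab : a ≤ b)
    (h : Set.Icc a b ∈ intervalsOf n B E) : a ∈ B ∧ b ∈ E := by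
  obtain ⟨-, ha, hb⟩ := h
  exact ⟨intB_Icc hab ▸ ha, intE_Icc hab ▸ hb⟩

lemma Effective.subset_of_intervalsOf_subset {n : ℕ} {B E B' E' : Set ℕ}
    (hB : B ⊆ Set.Ici 1) (hE : E ⊆ Set.Iic n) (heff : Effective B E)
    (h : intervalsOf n B E ⊆ intervalsOf n B' E') : B ⊆ B' ∧ E ⊆ E' := by
  constructor
  · intro b hb
    obtain ⟨e, he, hbe⟩ := heff.1 b hb
    exact (mem_of_Icc_mem_intervalsOf hbe (h (Icc_mem_intervalsOf (hB hb) hbe (hE he) hb he))).1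
  · intro e he
    obtain ⟨b, hb, hbe⟩ := heff.2 e he
    exact (mem_of_Icc_mem_intervalsOf hbe (h (Icc_mem_intervalsOf (hB hb) hbe (hE he) hb he))).2

lemma Effective.eq_of_intervalsOf_eq {n : ℕ} {B E B' E' : Set ℕ}
    (hB : B ⊆ Set.Ici 1) (hE : E ⊆ Set.Iic n) (hB' : B' ⊆ Set.Ici 1) (hE' : E' ⊆ Set.Iic n)
    (heff : Effective B E) (heff' : Effective B' E')
    (h : intervalsOf n B E = intervalsOf n B' E') : B = B' ∧ E = E' := by
  obtain ⟨hBB', hEE'⟩ := heff.subset_of_intervalsOf_subset hB hE h.subset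
  obtain ⟨hB'B, hE'E⟩ := heff'.subset_of_intervalsOf_subset hB' hE' h.superset
  exact ⟨hBB'.antisymm hB'B, hEE'.antisymm hE'E⟩

def effectiveStarts (C F : Set ℕ) : Set ℕ := {b ∈ C | ∃ e ∈ F, b ≤ e}

def effectiveEnds (C F : Set ℕ) : Set ℕ := {e ∈ F | ∃ b ∈ C, b ≤ e}

lemma effective_effectiveStarts_effectiveEnds (C F : Set ℕ) :
    Effective (effectiveStarts C F) (effectiveEnds C F) :=
  ⟨fun b ⟨hb, e, he, hbe⟩ => ⟨e, ⟨he, b, hb, hbe⟩, hbe⟩,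
    fun e ⟨he, b, hb, hbe⟩ => ⟨b, ⟨hb, e, he, hbe⟩, hbe⟩⟩

lemma intervalsOf_effectiveStarts_effectiveEnds (n : ℕ) (C F : Set ℕ) :
    intervalsOf n (effectiveStarts C F) (effectiveEnds C F) = intervalsOf n C F := by
  refine Set.Subset.antisymm (fun K ⟨hK, hb, he⟩ => ⟨hK, hb.1, he.1⟩) ?_
  rintro K ⟨⟨i, j, hi, hij, hjn, rfl⟩, hiC, hjF⟩
  rw [intB_Icc hij] at hiC
  rw [intE_Icc hij] at hjF
  exact Icc_mem_intervalsOf hi hij hjn ⟨hiC, j, hjF, hij⟩ ⟨hjF, i, hiC, hij⟩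

theorem exists_unique_effective_general (n : ℕ) (C F : Set ℕ)
    (hC : C ⊆ Set.Icc 1 n) (hF : F ⊆ Set.Icc 1 n) :
    ∃! p : Set ℕ × Set ℕ,
      p.1 ⊆ Set.Icc 1 n ∧ p.2 ⊆ Set.Icc 1 n ∧ Effective p.1 p.2 ∧
        intervalsOf n C F = intervalsOf n p.1 p.2 := by
  have hB : effectiveStarts C F ⊆ Set.Icc 1 n := fun b hb => hC hb.1
  have hE : effectiveEnds C F ⊆ Set.Icc 1 n := fun e he => hF he.1
  have hJ := intervalsOf_effectiveStarts_effectiveEnds n C F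
  have heff := effective_effectiveStarts_effectiveEnds C F
  refine ⟨(effectiveStarts C F, effectiveEnds C F), ⟨hB, hE, heff, hJ.symm⟩, ?_⟩
  rintro ⟨B', E'⟩ ⟨hB', hE', heff', hJ'⟩
  obtain ⟨rfl, rfl⟩ := heff'.eq_of_intervalsOf_eq (hB'.trans Set.Icc_subset_Ici_self)
    (hE'.trans Set.Icc_subset_Iic_self) (hB.trans Set.Icc_subset_Ici_self)
    (hE.trans Set.Icc_subset_Iic_self) heff (hJ'.symm.trans hJ.symm)
  rfl

/-- For every pair `(C, F)` of subsets of `{1, …, n}` there is a unique effective pair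
`(B, E)` of subsets of `{1, …, n}` with `J(C, F) = J(B, E)`. -/
theorem exists_unique_effective (n : ℕ) (hn : 1 ≤ n) (C F : Set ℕ)
    (hC : C ⊆ Set.Icc 1 n) (hF : F ⊆ Set.Icc 1 n) :
    ∃! p : Set ℕ × Set ℕ,
      p.1 ⊆ Set.Icc 1 n ∧ p.2 ⊆ Set.Icc 1 n ∧ Effective p.1 p.2 ∧
        intervalsOf n C F = intervalsOf n p.1 p.2 :=
  exists_unique_effective_general n C F hC hF
end

section
/- Fix n ≥ 1 and v ∈ {1, …, n}. If J ⊆ I_n is adjacency-avoiding, then refl_v(J) is adjacency-avoiding. Moreover, if ⟦v⟧ ∉ J, then J is adjacency-avoiding if and only if refl_v(J) is adjacency-avoiding. -/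
open Classical in
/-- The interval reflection at `v`, defined on intervals `K ≠ ⟦v⟧`:
`refl_v(K) = K ∪ {v}` if `v ∉ K` and `K ∪ {v}` is an interval of `{1, …, n}`;
`refl_v(K) = K \ {v}` if `v ∈ K` and `K \ {v}` is an interval of `{1, …, n}`;
`refl_v(K) = K` otherwise. -/
noncomputable def reflInt (n v : ℕ) (K : Set ℕ) : Set ℕ :=
  if v ∉ K ∧ IsInterval n (K ∪ {v}) then K ∪ {v}
  else if v ∈ K ∧ IsInterval n (K \ {v}) then K \ {v}
  else K

/-- `refl_v(J) = {refl_v(K) : K ∈ J \ {⟦v⟧}}`. -/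
noncomputable def reflSet (n v : ℕ) (J : Set (Set ℕ)) : Set (Set ℕ) :=
  reflInt n v '' (J \ {Set.Icc v v})

/-!
Encode an interval `K = ⟦i, j⟧` by the pair `(b(K), e(K) + 1) = (i, j + 1)`. For `K ≠ ⟦v⟧`, the
reflection `refl_v` acts on this pair by applying the transposition `(v v+1)` to both entries,
and adjacency of `K` and `L` is an equation between an entry of the pair of `K` and one of the
pair of `L`. A bijection preserves such equations in both directions.
-/

open Set Equiv

lemma intB_Icc_s18 {i j : ℕ} (h : i ≤ j) : intB (Icc i j) = i := csInf_Icc h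

lemma intE_Icc_s18 {i j : ℕ} (h : i ≤ j) : intE (Icc i j) = j := csSup_Icc h

lemma not_isInterval_of_gap {n a b c : ℕ} {K : Set ℕ} (ha : a ∈ K) (hc : c ∈ K)
    (hab : a ≤ b) (hbc : b ≤ c) (hb : b ∉ K) : ¬ IsInterval n K := by
  rintro ⟨i, j, -, -, -, rfl⟩
  exact hb (ordConnected_Icc.out ha hc ⟨hab, hbc⟩)

section reflInt

variable {n v : ℕ} {K : Set ℕ}

lemma reflInt_of_notMem (hv : v ∉ K) (hK : IsInterval n (K ∪ {v})) :
    reflInt n v K = K ∪ {v} := by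
  rw [reflInt, if_pos ⟨hv, hK⟩]

lemma reflInt_of_mem (hv : v ∈ K) (hK : IsInterval n (K \ {v})) :
    reflInt n v K = K \ {v} := by
  rw [reflInt, if_neg (fun h => h.1 hv), if_pos ⟨hv, hK⟩]

lemma reflInt_of_notMem_of_not_isInterval (hv : v ∉ K) (hK : ¬ IsInterval n (K ∪ {v})) :
    reflInt n v K = K := by
  rw [reflInt, if_neg (fun h => hK h.2), if_neg (fun h => hv h.1)]

lemma reflInt_of_mem_of_not_isInterval (hv : v ∈ K) (hK : ¬ IsInterval n (K \ {v})) :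
    reflInt n v K = K := by
  rw [reflInt, if_neg (fun h => h.1 hv), if_neg (fun h => hK h.2)]

variable {i j : ℕ}

lemma swap_lt_swap_succ (hij : i ≤ j) (hne : ¬ (i = v ∧ j = v)) :
    swap v (v + 1) i < swap v (v + 1) (j + 1) := by
  simp only [swap_apply_def]
  split_ifs <;> omega

lemma isInterval_Icc_swap (hv : 1 ≤ v) (hvn : v ≤ n) (hi : 1 ≤ i) (hij : i ≤ j) (hjn : j ≤ n)
    (hne : ¬ (i = v ∧ j = v)) :
    IsInterval n (Icc (swap v (v + 1) i) (swap v (v + 1) (j + 1) - 1)) := by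
  refine ⟨_, _, ?_, by have := swap_lt_swap_succ hij hne; omega, ?_, rfl⟩ <;>
    simp only [swap_apply_def] <;> split_ifs <;> omega

theorem reflInt_Icc (hv : 1 ≤ v) (hvn : v ≤ n) (hi : 1 ≤ i) (hij : i ≤ j) (hjn : j ≤ n)
    (hne : ¬ (i = v ∧ j = v)) :
    reflInt n v (Icc i j) = Icc (swap v (v + 1) i) (swap v (v + 1) (j + 1) - 1) := by
  have hint := isInterval_Icc_swap hv hvn hi hij hjn hne
  by_cases hmem : i ≤ v ∧ v ≤ j
  · by_cases hend : v = i ∨ v = j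
    · have hdiff : Icc i j \ {v} = Icc (swap v (v + 1) i) (swap v (v + 1) (j + 1) - 1) := by
        ext x
        simp only [swap_apply_def, mem_sdiff, mem_Icc, mem_singleton_iff]
        split_ifs <;> omega
      rw [reflInt_of_mem hmem (hdiff ▸ hint), hdiff]
    · have hgap : ¬ IsInterval n (Icc i j \ {v}) :=
        not_isInterval_of_gap (b := v) ⟨⟨le_rfl, hij⟩, fun h => hend (.inl h.symm)⟩
          ⟨⟨hij, le_rfl⟩, fun h => hend (.inr h.symm)⟩
          hmem.1 hmem.2 fun h => h.2 rfl
      rw [reflInt_of_mem_of_not_isInterval hmem hgap]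
      ext x
      simp only [swap_apply_def, mem_Icc]
      split_ifs <;> omega
  · by_cases hnext : v + 1 = i ∨ v = j + 1
    · have hunion : Icc i j ∪ {v} = Icc (swap v (v + 1) i) (swap v (v + 1) (j + 1) - 1) := by
        ext x
        simp only [swap_apply_def, mem_union, mem_Icc, mem_singleton_iff]
        split_ifs <;> omega
      rw [reflInt_of_notMem hmem (hunion ▸ hint), hunion]
    · have hgap : ¬ IsInterval n (Icc i j ∪ {v}) := by
        rcases not_and_or.mp hmem with hlt | hgt
        · exact not_isInterval_of_gap (.inr rfl) (.inl ⟨le_rfl, hij⟩) (Nat.le_succ v)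
            (by omega) fun h => by
              simp only [mem_union, mem_Icc, mem_singleton_iff] at h; omega
        · exact not_isInterval_of_gap (.inl ⟨hij, le_rfl⟩) (.inr rfl) (Nat.le_succ j)
            (by omega) fun h => by
              simp only [mem_union, mem_Icc, mem_singleton_iff] at h; omega
      rw [reflInt_of_notMem_of_not_isInterval hmem hgap]
      ext x
      simp only [swap_apply_def, mem_Icc]
      split_ifs <;> omega

lemma adjacent_reflInt_iff (hv : 1 ≤ v) (hvn : v ≤ n) {L : Set ℕ}
    (hK : IsInterval n K) (hKv : K ≠ Icc v v) (hL : IsInterval n L) (hLv : L ≠ Icc v v) :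
    Adjacent (reflInt n v K) (reflInt n v L) ↔ Adjacent K L := by
  have endpoints : ∀ {K}, IsInterval n K → K ≠ Icc v v →
      intB (reflInt n v K) = swap v (v + 1) (intB K) ∧
        intE (reflInt n v K) + 1 = swap v (v + 1) (intE K + 1) := by
    rintro _ ⟨i, j, hi, hij, hjn, rfl⟩ hKv
    have hne : ¬ (i = v ∧ j = v) := by rintro ⟨rfl, rfl⟩; exact hKv rfl
    have hlt := swap_lt_swap_succ hij hne
    rw [reflInt_Icc hv hvn hi hij hjn hne, intB_Icc_s18 hij, intE_Icc_s18 hij, intB_Icc_s18 (by omega),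
      intE_Icc_s18 (by omega)]
    omega
  obtain ⟨hbK, heK⟩ := endpoints hK hKv
  obtain ⟨hbL, heL⟩ := endpoints hL hLv
  rw [Adjacent, Adjacent, hbK, hbL, heK, heL, (swap v (v + 1)).apply_eq_iff_eq,
    (swap v (v + 1)).apply_eq_iff_eq]

end reflInt

/-- If `J ⊆ I_n` is adjacency-avoiding, so is `refl_v(J)`; moreover, if `⟦v⟧ ∉ J`, then
`J` is adjacency-avoiding if and only if `refl_v(J)` is. -/
theorem reflSet_adjAvoiding (n v : ℕ) (hv : 1 ≤ v) (hvn : v ≤ n)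
    (J : Set (Set ℕ)) (hJint : ∀ K ∈ J, IsInterval n K) :
    (AdjAvoiding J → AdjAvoiding (reflSet n v J)) ∧
      (Set.Icc v v ∉ J → (AdjAvoiding J ↔ AdjAvoiding (reflSet n v J))) := by
  have adj_iff {K L : Set ℕ} (hK : K ∈ J \ {Icc v v}) (hL : L ∈ J \ {Icc v v}) :
      Adjacent (reflInt n v K) (reflInt n v L) ↔ Adjacent K L :=
    adjacent_reflInt_iff hv hvn (hJint K hK.1) hK.2 (hJint L hL.1) hL.2
  have avoiding_of_avoiding : AdjAvoiding J → AdjAvoiding (reflSet n v J) := by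
    rintro hJ _ ⟨K, hK, rfl⟩ _ ⟨L, hL, rfl⟩
    rw [adj_iff hK hL]
    exact hJ K hK.1 L hL.1
  refine ⟨avoiding_of_avoiding, fun hvJ => ⟨avoiding_of_avoiding, fun hR K hK L hL => ?_⟩⟩
  have hK' : K ∈ J \ {Icc v v} := ⟨hK, fun h => hvJ (h ▸ hK)⟩
  have hL' : L ∈ J \ {Icc v v} := ⟨hL, fun h => hvJ (h ▸ hL)⟩
  rw [← adj_iff hK' hL']
  exact hR _ ⟨K, hK', rfl⟩ _ ⟨L, hL', rfl⟩
end
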